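/- arXiv:2601.14818 — 3 statements merged into one kernel-verified Lean document; each statement's English description precedes it below -/
import Mathlib

section
/- With the white noise mapping W of N(0,Q) as above, for all h₁, h₂ in the range of Q^{1/2}, ‖exp(i W_{h₁}(·)) - exp(i W_{h₂}(·))‖²_{L²(H,N(0,Q);ℂ)} = 2 - 2 exp(-½ ‖h₁ - h₂‖²_H). Consequently the map h ↦ exp(i W_h(·)) from H to L²(H, N(0,Q); ℂ) is continuous. -/
/-!
Since `‖e^{ia} - e^{ib}‖² = 2 - 2 cos (a - b)`, the squared `L²` distance is
`2 - 2 ∫ cos (W_{h₁} - W_{h₂}) dμ`. For `hᵢ = R uᵢ` with `R = Q^{1/2}`, linearity of `W` and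
`W_{R u} = ⟪u, ·⟫` turn the integrand into `cos ⟪u₁ - u₂, ·⟫`, whose integral is the real part of
the characteristic function of `N(0, Q)` at `u₁ - u₂`, i.e. `exp (-½ ⟪Q (u₁ - u₂), u₁ - u₂⟫)`, and
`⟪Q w, w⟫ = ‖R w‖²`. Continuity follows from `2 - 2 cos t ≤ t²` and the isometry property of `W`.
-/

open MeasureTheory
open scoped RealInnerProductSpace

namespace Complex

theorem norm_exp_I_mul_ofReal_sub_exp_I_mul_ofReal_sq (a b : ℝ) :
    ‖exp (I * a) - exp (I * b)‖ ^ 2 = 2 - 2 * Real.cos (a - b) := by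
  have hfactor : exp (I * a) - exp (I * b) = (exp (I * ↑(a - b)) - 1) * exp (I * b) := by
    rw [sub_mul, ← exp_add, one_mul]; push_cast; ring_nf
  have hcos : Real.cos (a - b) = Real.cos (2 * ((a - b) / 2)) := by ring_nf
  rw [hfactor, norm_mul, norm_exp_I_mul_ofReal, mul_one, norm_exp_I_mul_ofReal_sub_one,
    Real.norm_eq_abs, sq_abs, hcos, Real.cos_two_mul]
  linear_combination 4 * Real.sin_sq_add_cos_sq ((a - b) / 2)

end Complex

open Complex

section UnitCircle

variable {α : Type*} [MeasurableSpace α] {μ : Measure α} {f g : α → ℝ}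

theorem integrable_cos_comp [IsFiniteMeasure μ] (hf : AEStronglyMeasurable f μ) :
    Integrable (fun x => Real.cos (f x)) μ :=
  .of_bound (by fun_prop) 1 (.of_forall fun x => by simpa using Real.abs_cos_le_one _)

theorem integral_cos_eq_re_integral_exp_I_mul_ofReal [IsFiniteMeasure μ]
    (hf : AEStronglyMeasurable f μ) :
    ∫ x, Real.cos (f x) ∂μ = (∫ x, exp (I * f x) ∂μ).re := by
  have hexp : Integrable (fun x => exp (I * f x)) μ :=
    .of_bound (by fun_prop) 1 (.of_forall fun x => (norm_exp_I_mul_ofReal (f x)).le)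
  rw [← reCLM_apply, ← reCLM.integral_comp_comm hexp]
  congr 1 with x
  rw [reCLM_apply, mul_comm, exp_ofReal_mul_I_re]

theorem integral_norm_exp_I_mul_ofReal_sub_sq [IsProbabilityMeasure μ]
    (hf : AEStronglyMeasurable f μ) (hg : AEStronglyMeasurable g μ) :
    ∫ x, ‖exp (I * f x) - exp (I * g x)‖ ^ 2 ∂μ = 2 - 2 * ∫ x, Real.cos (f x - g x) ∂μ := by
  have hcos : Integrable (fun x => Real.cos (f x - g x)) μ := integrable_cos_comp (hf.sub hg)
  simp_rw [norm_exp_I_mul_ofReal_sub_exp_I_mul_ofReal_sq]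
  rw [integral_sub (integrable_const 2) (hcos.const_mul 2), integral_const_mul]
  simp

theorem integral_norm_exp_I_mul_ofReal_sub_sq_le [IsFiniteMeasure μ]
    (hf : MemLp f 2 μ) (hg : MemLp g 2 μ) :
    ∫ x, ‖exp (I * f x) - exp (I * g x)‖ ^ 2 ∂μ ≤ ∫ x, (f x - g x) ^ 2 ∂μ := by
  have hcos : Integrable (fun x => Real.cos (f x - g x)) μ := integrable_cos_comp (hf.1.sub hg.1)
  simp_rw [norm_exp_I_mul_ofReal_sub_exp_I_mul_ofReal_sq]
  refine integral_mono ((integrable_const 2).sub (hcos.const_mul 2))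
    (hf.sub hg).integrable_sq fun x => ?_
  linarith [Real.one_sub_sq_div_two_le_cos (x := f x - g x)]

end UnitCircle

theorem stmt_7_general
    {H : Type*} [NormedAddCommGroup H] [InnerProductSpace ℝ H] [CompleteSpace H]
    [MeasurableSpace H] [BorelSpace H]
    (Q R : H →L[ℝ] H)
    (hRsa : IsSelfAdjoint R)
    (hRR : ∀ x : H, R (R x) = Q x)
    (μ : Measure H) [IsProbabilityMeasure μ]
    (hFourier : ∀ u : H,
      ∫ x, Complex.exp (Complex.I * (⟪u, x⟫ : ℝ)) ∂μ
        = Complex.exp (-((⟪Q u, u⟫ : ℝ) : ℂ) / 2))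
    (W : H → H → ℝ)
    (hWmem : ∀ h : H, MemLp (W h) 2 μ)
    (hWlin : ∀ (a : ℝ) (h₁ h₂ : H),
      (fun x => W (a • h₁ + h₂) x) =ᵐ[μ] fun x => a * W h₁ x + W h₂ x)
    (hWiso : ∀ h₁ h₂ : H, ∫ x, (W h₁ x - W h₂ x) ^ 2 ∂μ = ‖h₁ - h₂‖ ^ 2)
    (hWrange : ∀ h₀ : H, (fun x => W (R h₀) x) =ᵐ[μ] fun x => ⟪h₀, x⟫) :
    (∀ u v : H,
      ∫ x, ‖Complex.exp (Complex.I * (W (R u) x : ℝ))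
              - Complex.exp (Complex.I * (W (R v) x : ℝ))‖ ^ 2 ∂μ
        = 2 - 2 * Real.exp (-‖R u - R v‖ ^ 2 / 2)) ∧
    ∀ h : H, ∀ ε > (0 : ℝ), ∃ δ > (0 : ℝ), ∀ h' : H, ‖h - h'‖ < δ →
      ∫ x, ‖Complex.exp (Complex.I * (W h x : ℝ))
              - Complex.exp (Complex.I * (W h' x : ℝ))‖ ^ 2 ∂μ < ε := by
  refine ⟨fun u v => ?_, fun h ε hε => ?_⟩
  · have hdiff : (fun x => W (R u) x - W (R v) x) =ᵐ[μ] fun x => ⟪u - v, x⟫ := by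
      filter_upwards [hWlin (-1) (R v) (R u), hWrange (u - v)] with x hlin hrange
      have hR : R (u - v) = (-1 : ℝ) • R v + R u := by rw [map_sub]; module
      rw [← hrange, hR, hlin]
      ring
    have hQ : ⟪Q (u - v), u - v⟫ = ‖R u - R v‖ ^ 2 := by
      rw [← hRR, ← ContinuousLinearMap.adjoint_inner_right, hRsa.adjoint_eq, map_sub,
        real_inner_self_eq_norm_sq]
    rw [integral_norm_exp_I_mul_ofReal_sub_sq (hWmem _).1 (hWmem _).1,
      integral_congr_ae (hdiff.mono fun x hx => congrArg Real.cos hx),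
      integral_cos_eq_re_integral_exp_I_mul_ofReal (by fun_prop), hFourier, hQ,
      ← ofReal_neg, ← ofReal_ofNat, ← ofReal_div, exp_ofReal_re]
  · refine ⟨√ε, Real.sqrt_pos.2 hε, fun h' hh' => ?_⟩
    calc _ ≤ ∫ x, (W h x - W h' x) ^ 2 ∂μ :=
          integral_norm_exp_I_mul_ofReal_sub_sq_le (hWmem h) (hWmem h')
      _ = ‖h - h'‖ ^ 2 := hWiso h h'
      _ < √ε ^ 2 := by gcongr
      _ = ε := Real.sq_sqrt hε.le

/-- For `h₁, h₂` in the range of `Q^{1/2}`,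
`‖exp(iW_{h₁}) - exp(iW_{h₂})‖²_{L²} = 2 - 2 exp(-½‖h₁-h₂‖²)`; consequently
`h ↦ exp(i W_h(·))` is continuous from `H` into `L²(H, N(0,Q); ℂ)`. -/
theorem stmt_7
    {H : Type*} [NormedAddCommGroup H] [InnerProductSpace ℝ H] [CompleteSpace H]
    [TopologicalSpace.SeparableSpace H] [MeasurableSpace H] [BorelSpace H]
    (Q R : H →L[ℝ] H)
    (hQsa : IsSelfAdjoint Q)
    (hQpos : ∀ x : H, 0 ≤ ⟪x, Q x⟫)
    (hQtrace : ∃ (ι : Type) (b : HilbertBasis ι ℝ H), Summable fun i => ⟪b i, Q (b i)⟫)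
    (hQker : LinearMap.ker (Q : H →ₗ[ℝ] H) = ⊥)
    (hRsa : IsSelfAdjoint R)
    (hRpos : ∀ x : H, 0 ≤ ⟪x, R x⟫)
    (hRR : ∀ x : H, R (R x) = Q x)
    (μ : Measure H) [IsProbabilityMeasure μ]
    (hFourier : ∀ u : H,
      ∫ x, Complex.exp (Complex.I * (⟪u, x⟫ : ℝ)) ∂μ
        = Complex.exp (-((⟪Q u, u⟫ : ℝ) : ℂ) / 2))
    (W : H → H → ℝ)
    (hWmem : ∀ h : H, MemLp (W h) 2 μ)
    (hWlin : ∀ (a : ℝ) (h₁ h₂ : H),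
      (fun x => W (a • h₁ + h₂) x) =ᵐ[μ] fun x => a * W h₁ x + W h₂ x)
    (hWiso : ∀ h₁ h₂ : H, ∫ x, (W h₁ x - W h₂ x) ^ 2 ∂μ = ‖h₁ - h₂‖ ^ 2)
    (hWrange : ∀ h₀ : H, (fun x => W (R h₀) x) =ᵐ[μ] fun x => ⟪h₀, x⟫) :
    (∀ u v : H,
      ∫ x, ‖Complex.exp (Complex.I * (W (R u) x : ℝ))
              - Complex.exp (Complex.I * (W (R v) x : ℝ))‖ ^ 2 ∂μ
        = 2 - 2 * Real.exp (-‖R u - R v‖ ^ 2 / 2)) ∧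
    ∀ h : H, ∀ ε > (0 : ℝ), ∃ δ > (0 : ℝ), ∀ h' : H, ‖h - h'‖ < δ →
      ∫ x, ‖Complex.exp (Complex.I * (W h x : ℝ))
              - Complex.exp (Complex.I * (W h' x : ℝ))‖ ^ 2 ∂μ < ε :=
  stmt_7_general Q R hRsa hRR μ hFourier W hWmem hWlin hWiso hWrange
end

section
/- Let H be a separable real Hilbert space, Q ∈ L₁⁺(H) with ker(Q)={0}, γ > 0, and W the white noise mapping of N(0,Q). Then for all x, x' ∈ H, exp(-‖x - x'‖²_H/γ²) = ⟨exp(i√2/γ · W_{x'}(·)), exp(i√2/γ · W_x(·))⟩ in L²(H, N(0,Q); ℂ), where the inner product is ∫ f ḡ dN(0,Q). Hence L²(H, N(0,Q); ℂ) is a (complex) feature space for the Gaussian kernel k_γ on H, with feature map x ↦ exp(i√2/γ · W_x(·)). -/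
open MeasureTheory
open scoped RealInnerProductSpace

/-!
For `h = R u` in the range of `R`, `W h` agrees a.e. with `⟪u, ·⟫`, so the Fourier transform of
`μ` gives `∫ exp(i W h) dμ = exp(-⟪Q u, u⟫/2) = exp(-‖h‖²/2)`. Since `R` is self-adjoint with
trivial kernel its range is dense, and `h ↦ ∫ exp(i W h) dμ` is 1-Lipschitz because `W` is an
`L²`-isometry and `t ↦ exp(i t)` is 1-Lipschitz; hence `∫ exp(i W h) dμ = exp(-‖h‖²/2)` for every
`h`. By linearity of `W`, the integrand is a.e. `exp(i W (c • (x - x')))` with `c = √2/γ`, whose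
integral is `exp(-c²‖x - x'‖²/2) = exp(-‖x - x'‖²/γ²)`.
-/

lemma norm_cexp_I_mul_sub_cexp_I_mul_le (a b : ℝ) :
    ‖Complex.exp (Complex.I * a) - Complex.exp (Complex.I * b)‖ ≤ |a - b| := by
  have hfactor : Complex.exp (Complex.I * a) - Complex.exp (Complex.I * b)
      = Complex.exp (Complex.I * b) * (Complex.exp (Complex.I * ((a - b : ℝ) : ℂ)) - 1) := by
    rw [mul_sub, ← Complex.exp_add]; push_cast; ring_nf
  rw [hfactor, norm_mul, mul_comm Complex.I, Complex.norm_exp_ofReal_mul_I, one_mul]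
  simpa using Real.norm_exp_I_mul_ofReal_sub_one_le (x := a - b)

section ProbabilitySpace

variable {Ω : Type*} [MeasurableSpace Ω] {μ : Measure Ω} [IsProbabilityMeasure μ]

lemma integral_abs_le_sqrt_integral_sq {g : Ω → ℝ} (hg : MemLp g 2 μ) :
    ∫ z, |g z| ∂μ ≤ Real.sqrt (∫ z, g z ^ 2 ∂μ) := by
  have hvar := ProbabilityTheory.variance_eq_sub hg.abs
  have hnonneg := ProbabilityTheory.variance_nonneg |g| μ
  simp only [Pi.pow_apply, Pi.abs_apply, sq_abs] at hvar
  exact Real.le_sqrt_of_sq_le (by linarith)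

lemma integrable_cexp_I_mul {f : Ω → ℝ} (hf : AEStronglyMeasurable f μ) :
    Integrable (fun z => Complex.exp (Complex.I * f z)) μ := by
  refine Integrable.of_bound (by fun_prop) 1 (Filter.Eventually.of_forall fun z => ?_)
  rw [mul_comm, Complex.norm_exp_ofReal_mul_I]

lemma lipschitzWith_integral_cexp_I_mul {E : Type*} [PseudoMetricSpace E] {W : E → Ω → ℝ}
    (hWmem : ∀ h, MemLp (W h) 2 μ)
    (hWiso : ∀ h₁ h₂, ∫ z, (W h₁ z - W h₂ z) ^ 2 ∂μ = dist h₁ h₂ ^ 2) :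
    LipschitzWith 1 fun h => ∫ z, Complex.exp (Complex.I * W h z) ∂μ := by
  refine LipschitzWith.of_dist_le_mul fun a b => ?_
  have hint := fun h => integrable_cexp_I_mul (hWmem h).aestronglyMeasurable (μ := μ)
  rw [dist_eq_norm, ← integral_sub (hint a) (hint b), NNReal.coe_one, one_mul]
  calc ‖∫ z, (Complex.exp (Complex.I * W a z) - Complex.exp (Complex.I * W b z)) ∂μ‖
      ≤ ∫ z, ‖Complex.exp (Complex.I * W a z) - Complex.exp (Complex.I * W b z)‖ ∂μ :=
        norm_integral_le_integral_norm _
    _ ≤ ∫ z, |W a z - W b z| ∂μ :=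
        integral_mono_of_nonneg (Filter.Eventually.of_forall fun z => norm_nonneg _)
          (((hWmem a).sub (hWmem b)).integrable one_le_two).abs
          (Filter.Eventually.of_forall fun z => norm_cexp_I_mul_sub_cexp_I_mul_le _ _)
    _ ≤ Real.sqrt (∫ z, (W a z - W b z) ^ 2 ∂μ) :=
        integral_abs_le_sqrt_integral_sq ((hWmem a).sub (hWmem b))
    _ = dist a b := by rw [hWiso, Real.sqrt_sq dist_nonneg]

end ProbabilitySpace

lemma ContinuousLinearMap.denseRange_of_isSelfAdjoint {𝕜 H : Type*} [RCLike 𝕜]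
    [NormedAddCommGroup H] [InnerProductSpace 𝕜 H] [CompleteSpace H] {T : H →L[𝕜] H}
    (hT : IsSelfAdjoint T) (hker : T.ker = ⊥) : DenseRange T := by
  change Dense ((T : H →ₗ[𝕜] H).range : Set H)
  rw [Submodule.dense_iff_topologicalClosure_eq_top, Submodule.topologicalClosure_eq_top_iff,
    T.orthogonal_range, hT.adjoint_eq, hker]

lemma cexp_I_mul_mul_conj_cexp_I_mul (c a b : ℝ) :
    Complex.exp (Complex.I * (c : ℂ) * a) * (starRingEnd ℂ) (Complex.exp (Complex.I * (c : ℂ) * b))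
      = Complex.exp (Complex.I * ((c * (a - b) : ℝ) : ℂ)) := by
  rw [← Complex.exp_conj, ← Complex.exp_add, map_mul, map_mul, Complex.conj_I,
    Complex.conj_ofReal, Complex.conj_ofReal]
  push_cast
  ring_nf

lemma ae_eq_apply_smul_sub {Ω E : Type*} [MeasurableSpace Ω] {μ : Measure Ω} [AddCommGroup E]
    [Module ℝ E] {W : E → Ω → ℝ}
    (hWlin : ∀ (a : ℝ) (h₁ h₂ : E), (fun z => W (a • h₁ + h₂) z) =ᵐ[μ] fun z => a * W h₁ z + W h₂ z)
    (c : ℝ) (x x' : E) :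
    (fun z => W (c • (x - x')) z) =ᵐ[μ] fun z => c * (W x z - W x' z) := by
  have hzero : (fun z => W 0 z) =ᵐ[μ] fun _ => 0 := by
    filter_upwards [hWlin 1 0 0] with z hz
    simp only [one_smul, add_zero, one_mul] at hz
    linarith
  have hsub := hWlin (-1) x' x
  rw [neg_one_smul, neg_add_eq_sub] at hsub
  have hsmul := hWlin c (x - x') 0
  rw [add_zero] at hsmul
  filter_upwards [hsmul, hsub, hzero] with z hz hz_sub hz_zero
  rw [hz, hz_sub, hz_zero]
  ring

theorem stmt_8_general
    {H : Type*} [NormedAddCommGroup H] [InnerProductSpace ℝ H] [CompleteSpace H]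
    [MeasurableSpace H]
    (Q R : H →L[ℝ] H)
    (hQker : LinearMap.ker (Q : H →ₗ[ℝ] H) = ⊥)
    (hRsa : IsSelfAdjoint R)
    (hRR : ∀ x : H, R (R x) = Q x)
    (μ : Measure H) [IsProbabilityMeasure μ]
    (hFourier : ∀ u : H,
      ∫ x, Complex.exp (Complex.I * (⟪u, x⟫ : ℝ)) ∂μ
        = Complex.exp (-((⟪Q u, u⟫ : ℝ) : ℂ) / 2))
    (W : H → H → ℝ)
    (hWmem : ∀ h : H, MemLp (W h) 2 μ)
    (hWlin : ∀ (a : ℝ) (h₁ h₂ : H),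
      (fun x => W (a • h₁ + h₂) x) =ᵐ[μ] fun x => a * W h₁ x + W h₂ x)
    (hWiso : ∀ h₁ h₂ : H, ∫ x, (W h₁ x - W h₂ x) ^ 2 ∂μ = ‖h₁ - h₂‖ ^ 2)
    (hWrange : ∀ h₀ : H, (fun x => W (R h₀) x) =ᵐ[μ] fun x => ⟪h₀, x⟫)
    (γ : ℝ) :
    ∀ x x' : H,
      (Real.exp (-‖x - x'‖ ^ 2 / γ ^ 2) : ℂ)
        = ∫ z, Complex.exp (Complex.I * ((Real.sqrt 2 / γ : ℝ) : ℂ) * (W x z : ℝ))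
            * (starRingEnd ℂ)
                (Complex.exp (Complex.I * ((Real.sqrt 2 / γ : ℝ) : ℂ) * (W x' z : ℝ))) ∂μ := by
  intro x x'
  have hRker : (R : H →ₗ[ℝ] H).ker = ⊥ :=
    eq_bot_mono (fun v (hv : R v = 0) => show Q v = 0 by rw [← hRR, hv, map_zero]) hQker
  have hgauss_range : ∀ u, ∫ z, Complex.exp (Complex.I * W (R u) z) ∂μ
      = Complex.exp (-((‖R u‖ ^ 2 : ℝ) : ℂ) / 2) := fun u => by
    rw [integral_congr_ae (by filter_upwards [hWrange u] with z hz; rw [hz]), hFourier, ← hRR,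
      show ⟪R (R u), u⟫ = ⟪R u, R u⟫ from hRsa.isSymmetric _ _, real_inner_self_eq_norm_sq]
  have hgauss : (fun h => ∫ z, Complex.exp (Complex.I * W h z) ∂μ)
      = fun h => Complex.exp (-((‖h‖ ^ 2 : ℝ) : ℂ) / 2) :=
    (R.denseRange_of_isSelfAdjoint hRsa hRker).equalizer
      (lipschitzWith_integral_cexp_I_mul hWmem (by simpa [dist_eq_norm] using hWiso)).continuous
      (by fun_prop) (funext hgauss_range)
  set c := Real.sqrt 2 / γ
  calc (Real.exp (-‖x - x'‖ ^ 2 / γ ^ 2) : ℂ)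
      = Complex.exp (-((‖c • (x - x')‖ ^ 2 : ℝ) : ℂ) / 2) := by
        rw [norm_smul, Real.norm_eq_abs, mul_pow, sq_abs, div_pow, Real.sq_sqrt zero_le_two]
        push_cast
        ring_nf
    _ = ∫ z, Complex.exp (Complex.I * W (c • (x - x')) z) ∂μ := (congrFun hgauss _).symm
    _ = _ := integral_congr_ae <| by
        filter_upwards [ae_eq_apply_smul_sub hWlin c x x'] with z hz
        rw [hz, cexp_I_mul_mul_conj_cexp_I_mul]

/-- `L²(H, N(0,Q); ℂ)` is a complex feature space for the Gaussian kernel `k_γ` on a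
separable real Hilbert space `H`, with feature map `x ↦ exp(i √2/γ · W_x(·))`:
`exp(-‖x-x'‖²/γ²) = ⟨exp(i√2/γ W_{x'}), exp(i√2/γ W_x)⟩ = ∫ Φ(x) ·  conj(Φ(x')) dN(0,Q)`. -/
theorem stmt_8
    {H : Type*} [NormedAddCommGroup H] [InnerProductSpace ℝ H] [CompleteSpace H]
    [TopologicalSpace.SeparableSpace H] [MeasurableSpace H] [BorelSpace H]
    (Q R : H →L[ℝ] H)
    (hQsa : IsSelfAdjoint Q)
    (hQpos : ∀ x : H, 0 ≤ ⟪x, Q x⟫)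
    (hQtrace : ∃ (ι : Type) (b : HilbertBasis ι ℝ H), Summable fun i => ⟪b i, Q (b i)⟫)
    (hQker : LinearMap.ker (Q : H →ₗ[ℝ] H) = ⊥)
    (hRsa : IsSelfAdjoint R)
    (hRpos : ∀ x : H, 0 ≤ ⟪x, R x⟫)
    (hRR : ∀ x : H, R (R x) = Q x)
    (μ : Measure H) [IsProbabilityMeasure μ]
    (hFourier : ∀ u : H,
      ∫ x, Complex.exp (Complex.I * (⟪u, x⟫ : ℝ)) ∂μ
        = Complex.exp (-((⟪Q u, u⟫ : ℝ) : ℂ) / 2))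
    (W : H → H → ℝ)
    (hWmem : ∀ h : H, MemLp (W h) 2 μ)
    (hWlin : ∀ (a : ℝ) (h₁ h₂ : H),
      (fun x => W (a • h₁ + h₂) x) =ᵐ[μ] fun x => a * W h₁ x + W h₂ x)
    (hWiso : ∀ h₁ h₂ : H, ∫ x, (W h₁ x - W h₂ x) ^ 2 ∂μ = ‖h₁ - h₂‖ ^ 2)
    (hWrange : ∀ h₀ : H, (fun x => W (R h₀) x) =ᵐ[μ] fun x => ⟪h₀, x⟫)
    (γ : ℝ) (hγ : 0 < γ) :
    ∀ x x' : H,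
      (Real.exp (-‖x - x'‖ ^ 2 / γ ^ 2) : ℂ)
        = ∫ z, Complex.exp (Complex.I * ((Real.sqrt 2 / γ : ℝ) : ℂ) * (W x z : ℝ))
            * (starRingEnd ℂ)
                (Complex.exp (Complex.I * ((Real.sqrt 2 / γ : ℝ) : ℂ) * (W x' z : ℝ))) ∂μ :=
  stmt_8_general Q R hQker hRsa hRR μ hFourier W hWmem hWlin hWiso hWrange γ
end

section
/- Let H be a separable real Hilbert space, Q ∈ L₁⁺(H) with ker(Q) = {0}, γ > 0, W the white noise mapping of N(0,Q), and g ∈ L²(H, N(0,Q); ℂ) with ‖g‖ ≤ 1. Define f(x) = Re ∫_H exp(-i√2/γ · W_x(z)) g(z) dN(z|0,Q). Then |f(x)| ≤ 1 for all x ∈ H, and f lies in the RKHS H_γ of the Gaussian kernel k_γ(x,x') = exp(-‖x-x'‖²/γ²) with ‖f‖_{H_γ} ≤ 1. -/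
/-!
Put `s = √2/γ`. The functions `Φ x = exp(i s W_x)` are feature vectors in the real Hilbert space
`L²(μ; ℂ)` with Gram matrix `k_γ`: by linearity of `W`, `⟪Φ x, Φ x'⟫ = Re E[exp(i s W_{x'-x})]`,
and `E[exp(i t W_h)] = exp(-t²‖h‖²/2)`. The latter holds for `h = R h₀`, where `W_h = ⟪h₀, ·⟫`
and the Fourier transform of `N(0,Q)` applies; it extends to all `h` since `ker Q = 0` makes the
range of `R` dense and `h ↦ W_h` is an isometry into `L²`. Since `f = ⟪g, Φ ·⟫` and two feature
maps with the same Gram matrix represent the same functions with the same norm bound, `f ∈ H_γ`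
with `‖f‖ ≤ ‖g‖ ≤ 1`, and `|f x| ≤ ‖f‖ √k_γ(x, x) ≤ 1`.
-/

open MeasureTheory Complex
open scoped RealInnerProductSpace ComplexConjugate

theorem Complex.norm_exp_I_mul_ofReal_sub_exp_I_mul_ofReal_le (a b : ℝ) :
    ‖exp (I * a) - exp (I * b)‖ ≤ |a - b| := by
  have : exp (I * a) - exp (I * b) = exp (I * b) * (exp (I * ↑(a - b)) - 1) := by
    rw [mul_sub, ← Complex.exp_add]; push_cast; ring_nf
  rw [this, norm_mul, norm_exp_I_mul_ofReal, one_mul, ← Real.norm_eq_abs]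
  exact Real.norm_exp_I_mul_ofReal_sub_one_le

theorem Complex.conj_exp_I_mul_ofReal (r : ℝ) : conj (exp (I * r)) = exp (-(I * r)) := by
  rw [← exp_conj, map_mul, conj_I, conj_ofReal, neg_mul]

section Probability

variable {Ω : Type*} [MeasurableSpace Ω] {μ : Measure Ω}

theorem real_inner_toLp_toLp {f g : Ω → ℂ} (hf : MemLp f 2 μ) (hg : MemLp g 2 μ) :
    ⟪hf.toLp f, hg.toLp g⟫ = (∫ ω, g ω * conj (f ω) ∂μ).re := by
  rw [L2.inner_def]
  calc _ = ∫ ω, (g ω * conj (f ω)).re ∂μ := by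
        refine integral_congr_ae ?_
        filter_upwards [hf.coeFn_toLp, hg.coeFn_toLp] with ω hfω hgω
        rw [hfω, hgω, Complex.inner]
    _ = _ := integral_re (hg.integrable_mul hf.star)

theorem norm_toLp_sq_eq_integral {f : Ω → ℂ} (hf : MemLp f 2 μ) :
    ‖hf.toLp f‖ ^ 2 = ∫ ω, ‖f ω‖ ^ 2 ∂μ := by
  rw [← real_inner_self_eq_norm_sq, real_inner_toLp_toLp]
  simp_rw [Complex.mul_conj', ← ofReal_pow, integral_complex_ofReal, ofReal_re]

theorem memLp_exp_I_mul_ofReal [IsFiniteMeasure μ] {X : Ω → ℝ} (hX : AEStronglyMeasurable X μ)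
    (p : ENNReal) : MemLp (fun ω => exp (I * X ω)) p μ :=
  .of_bound (by fun_prop) 1 (.of_forall fun ω => (norm_exp_I_mul_ofReal _).le)

theorem real_inner_toLp_exp_I_mul {H : Type*} [AddCommGroup H] [Module ℝ H] {W : H → Ω → ℝ}
    (hWlin : ∀ (a : ℝ) (h₁ h₂ : H),
      (fun ω => W (a • h₁ + h₂) ω) =ᵐ[μ] fun ω => a * W h₁ ω + W h₂ ω)
    {t : ℝ} {x y : H} (hx : MemLp (fun ω => exp (I * ↑(t * W x ω))) 2 μ)
    (hy : MemLp (fun ω => exp (I * ↑(t * W y ω))) 2 μ) :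
    ⟪hx.toLp _, hy.toLp _⟫ = (∫ ω, exp (I * ↑(t * W (y - x) ω)) ∂μ).re := by
  rw [real_inner_toLp_toLp]
  congr 1
  refine integral_congr_ae ?_
  filter_upwards [hWlin (-1) x y] with ω hω
  rw [conj_exp_I_mul_ofReal, ← Complex.exp_add, sub_eq_neg_add, ← neg_one_smul ℝ x, hω]
  push_cast
  ring_nf

variable [IsProbabilityMeasure μ]

theorem sq_integral_abs_le_integral_sq {X : Ω → ℝ} (hX : MemLp X 2 μ) :
    (∫ ω, |X ω| ∂μ) ^ 2 ≤ ∫ ω, X ω ^ 2 ∂μ := by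
  have := ProbabilityTheory.variance_nonneg |X| μ
  rw [ProbabilityTheory.variance_eq_sub hX.abs] at this
  simpa [sq_abs] using this

theorem lipschitzWith_integral_exp_I_mul {H : Type*} [NormedAddCommGroup H] {W : H → Ω → ℝ}
    (hWmem : ∀ h, MemLp (W h) 2 μ)
    (hWiso : ∀ h₁ h₂, ∫ ω, (W h₁ ω - W h₂ ω) ^ 2 ∂μ = ‖h₁ - h₂‖ ^ 2) (t : ℝ) :
    LipschitzWith ‖t‖₊ fun h => ∫ ω, exp (I * ↑(t * W h ω)) ∂μ := by
  have hint : ∀ h, Integrable (fun ω => exp (I * ↑(t * W h ω))) μ := fun h =>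
    memLp_one_iff_integrable.1 <|
      memLp_exp_I_mul_ofReal ((hWmem h).aestronglyMeasurable.const_mul t) 1
  refine LipschitzWith.of_dist_le_mul fun h₁ h₂ => ?_
  have hdiff := (hWmem h₁).sub (hWmem h₂)
  have hL1 : ∫ ω, |W h₁ ω - W h₂ ω| ∂μ ≤ ‖h₁ - h₂‖ := by
    refine abs_le_of_sq_le_sq' ?_ (norm_nonneg _) |>.2
    exact (sq_integral_abs_le_integral_sq hdiff).trans_eq (hWiso h₁ h₂)
  rw [dist_eq_norm, dist_eq_norm, ← integral_sub (hint h₁) (hint h₂), coe_nnnorm,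
    Real.norm_eq_abs]
  calc ‖∫ ω, exp (I * ↑(t * W h₁ ω)) - exp (I * ↑(t * W h₂ ω)) ∂μ‖
      ≤ ∫ ω, |t| * |W h₁ ω - W h₂ ω| ∂μ := by
        refine norm_integral_le_of_norm_le ((hdiff.integrable one_le_two).abs.const_mul _) ?_
        refine .of_forall fun ω => ?_
        rw [← abs_mul, mul_sub]
        exact norm_exp_I_mul_ofReal_sub_exp_I_mul_ofReal_le _ _
    _ ≤ |t| * ‖h₁ - h₂‖ := by
        rw [integral_const_mul]; gcongr

end Probability

open WithLp in
theorem exists_norm_le_inner_eq_of_inner_eq {ι E F : Type*} [NormedAddCommGroup E]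
    [InnerProductSpace ℝ E] [CompleteSpace E] [NormedAddCommGroup F] [InnerProductSpace ℝ F]
    [CompleteSpace F] (Φ : ι → E) (Ψ : ι → F) (hk : ∀ x y, ⟪Φ x, Φ y⟫ = ⟪Ψ x, Ψ y⟫) (g : E) :
    ∃ fh : F, ‖fh‖ ≤ ‖g‖ ∧ ∀ x, ⟪fh, Ψ x⟫ = ⟪g, Φ x⟫ := by
  -- `fh` is read off the projection of `(g, 0)` onto the closed span `V` of the pairs
  -- `(Φ x, Ψ x)`, on whose elements the two components have the same inner products.
  let σ (u : WithLp 2 (E × F)) : WithLp 2 (E × F) := toLp 2 (u.ofLp.1, -u.ofLp.2)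
  have hσ (u v) : ⟪σ u, v⟫ = ⟪u.ofLp.1, v.ofLp.1⟫ - ⟪u.ofLp.2, v.ofLp.2⟫ := by
    simp [σ, inner_neg_left, sub_eq_add_neg]
  let e (x : ι) : WithLp 2 (E × F) := toLp 2 (Φ x, Ψ x)
  let V := (Submodule.span ℝ (Set.range e)).topologicalClosure
  have he (x) : e x ∈ V := Submodule.le_topologicalClosure _ (Submodule.subset_span ⟨x, rfl⟩)
  have hσe : ∀ v ∈ V, ∀ x, ⟪σ (e x), v⟫ = 0 := by
    intro v hv x
    refine ContinuousLinearMap.eqOn_closure_span (f := innerSL ℝ (σ (e x))) (g := 0) ?_ hv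
    rintro _ ⟨y, rfl⟩
    simp [hσ, e, hk]
  have hσV : ∀ u ∈ V, ∀ v ∈ V, ⟪σ u, v⟫ = 0 := by
    intro u hu v hv
    refine ContinuousLinearMap.eqOn_closure_span (f := innerSL ℝ (σ u)) (g := 0) ?_ hv
    rintro _ ⟨x, rfl⟩
    have hux := hσe u hu x
    simp only [hσ, e] at hux
    simp only [innerSL_apply_apply, hσ, zero_apply, e]
    rwa [real_inner_comm (Ψ x), real_inner_comm (Φ x)]
  set v := V.starProjection (toLp 2 (g, 0))
  have hv : v ∈ V := V.starProjection_apply_mem _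
  have hproj : ∀ w ∈ V, ⟪g, w.ofLp.1⟫ = ⟪v, w⟫ := by
    intro w hw
    have := V.starProjection_inner_eq_zero (toLp 2 (g, 0)) w hw
    rw [inner_sub_left, sub_eq_zero] at this
    simpa using this
  refine ⟨(2 : ℝ) • v.ofLp.2, ?_, fun x => ?_⟩
  · have hnorm : ‖v.ofLp.1‖ = ‖v.ofLp.2‖ := by
      have := hσV v hv v hv
      rw [hσ, real_inner_self_eq_norm_sq, real_inner_self_eq_norm_sq, sub_eq_zero] at this
      exact (sq_eq_sq₀ (norm_nonneg _) (norm_nonneg _)).1 this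
    have hself := hproj v hv
    rw [prod_inner_apply, real_inner_self_eq_norm_sq, real_inner_self_eq_norm_sq] at hself
    have hcs := real_inner_le_norm g v.ofLp.1
    -- `2 ‖v.2‖² = ⟪g, v.1⟫ ≤ ‖g‖ ‖v.2‖`
    rw [norm_smul, Real.norm_two]
    nlinarith [norm_nonneg g, norm_nonneg v.ofLp.2]
  · have h1 := hproj (e x) (he x)
    have h2 := hσV v hv (e x) (he x)
    simp only [hσ, prod_inner_apply, e] at h1 h2
    rw [real_inner_smul_left]
    linarith

theorem IsSelfAdjoint.denseRange_of_ker_eq_bot {𝕜 H : Type*} [RCLike 𝕜] [NormedAddCommGroup H]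
    [InnerProductSpace 𝕜 H] [CompleteSpace H] {R : H →L[𝕜] H} (hR : IsSelfAdjoint R)
    (hker : R.ker = ⊥) : DenseRange R := by
  have : R.rangeᗮ = ⊥ := by rw [R.orthogonal_range, hR.adjoint_eq, hker]
  rw [← Submodule.topologicalClosure_eq_top_iff,
    ← Submodule.dense_iff_topologicalClosure_eq_top] at this
  rwa [LinearMap.coe_range] at this

theorem integral_exp_I_mul_whiteNoise {H : Type*} [NormedAddCommGroup H]
    [InnerProductSpace ℝ H] [CompleteSpace H] [MeasurableSpace H] {μ : Measure H}
    [IsProbabilityMeasure μ] {Q R : H →L[ℝ] H} {W : H → H → ℝ} (hRsa : IsSelfAdjoint R)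
    (hRR : ∀ x, R (R x) = Q x) (hQker : LinearMap.ker (Q : H →ₗ[ℝ] H) = ⊥)
    (hFourier : ∀ u : H,
      ∫ x, exp (I * (⟪u, x⟫ : ℝ)) ∂μ = exp (-((⟪Q u, u⟫ : ℝ) : ℂ) / 2))
    (hWmem : ∀ h, MemLp (W h) 2 μ)
    (hWiso : ∀ h₁ h₂, ∫ x, (W h₁ x - W h₂ x) ^ 2 ∂μ = ‖h₁ - h₂‖ ^ 2)
    (hWrange : ∀ h₀ : H, (fun x => W (R h₀) x) =ᵐ[μ] fun x => ⟪h₀, x⟫) (t : ℝ) (h : H) :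
    ∫ z, exp (I * ↑(t * W h z)) ∂μ = ↑(Real.exp (-(t ^ 2 * ‖h‖ ^ 2) / 2)) := by
  have hker : R.ker = ⊥ := by
    rw [eq_bot_iff, ← hQker]
    intro x (hx : R x = 0)
    change Q x = 0
    rw [← hRR, hx, map_zero]
  refine congrFun (Continuous.ext_on (hRsa.denseRange_of_ker_eq_bot hker)
    (lipschitzWith_integral_exp_I_mul hWmem hWiso t).continuous
    (g := fun h => ((Real.exp (-(t ^ 2 * ‖h‖ ^ 2) / 2) : ℝ) : ℂ)) (by fun_prop) ?_) h
  rintro _ ⟨h₀, rfl⟩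
  have hQR : ⟪Q h₀, h₀⟫ = ‖R h₀‖ ^ 2 := by
    rw [← hRR, ← real_inner_self_eq_norm_sq]
    exact hRsa.isSymmetric (R h₀) h₀
  calc ∫ z, exp (I * ↑(t * W (R h₀) z)) ∂μ = ∫ z, exp (I * ⟪t • h₀, z⟫) ∂μ := by
        refine integral_congr_ae ?_
        filter_upwards [hWrange h₀] with z hz
        rw [hz, real_inner_smul_left]
    _ = _ := by
        rw [hFourier, map_smul, real_inner_smul_left, real_inner_smul_right, hQR]
        push_cast
        ring_nf

theorem stmt_19_general
    {H : Type*} [NormedAddCommGroup H] [InnerProductSpace ℝ H] [CompleteSpace H]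
    [MeasurableSpace H]
    {Hγ : Type*} [NormedAddCommGroup Hγ] [InnerProductSpace ℝ Hγ] [CompleteSpace Hγ]
    (Q R : H →L[ℝ] H)
    (hQker : LinearMap.ker (Q : H →ₗ[ℝ] H) = ⊥)
    (hRsa : IsSelfAdjoint R)
    (hRR : ∀ x : H, R (R x) = Q x)
    (μ : Measure H) [IsProbabilityMeasure μ]
    (hFourier : ∀ u : H,
      ∫ x, Complex.exp (Complex.I * (⟪u, x⟫ : ℝ)) ∂μ
        = Complex.exp (-((⟪Q u, u⟫ : ℝ) : ℂ) / 2))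
    (W : H → H → ℝ)
    (hWmem : ∀ h : H, MemLp (W h) 2 μ)
    (hWlin : ∀ (a : ℝ) (h₁ h₂ : H),
      (fun x => W (a • h₁ + h₂) x) =ᵐ[μ] fun x => a * W h₁ x + W h₂ x)
    (hWiso : ∀ h₁ h₂ : H, ∫ x, (W h₁ x - W h₂ x) ^ 2 ∂μ = ‖h₁ - h₂‖ ^ 2)
    (hWrange : ∀ h₀ : H, (fun x => W (R h₀) x) =ᵐ[μ] fun x => ⟪h₀, x⟫)
    (γ : ℝ)
    -- the RKHS of the Gaussian kernel k_γ, via its canonical feature map: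
    (Φγ : H → Hγ)
    (hΦγ : ∀ x x' : H, Real.exp (-‖x - x'‖ ^ 2 / γ ^ 2) = ⟪Φγ x', Φγ x⟫)
    (g : H → ℂ) (hg : MemLp g 2 μ) (hgnorm : ∫ z, ‖g z‖ ^ 2 ∂μ ≤ 1)
    (f : H → ℝ)
    (hf : ∀ x : H, f x =
      (∫ z, Complex.exp (-(Complex.I * ((Real.sqrt 2 / γ : ℝ) : ℂ) * (W x z : ℝ)))
          * g z ∂μ).re) :
    (∀ x : H, |f x| ≤ 1) ∧
    ∃ fh : Hγ, ‖fh‖ ≤ 1 ∧ ∀ x : H, ⟪fh, Φγ x⟫ = f x := by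
  set s := Real.sqrt 2 / γ
  have hmem : ∀ x, MemLp (fun z => exp (I * ↑(s * W x z))) 2 μ := fun x =>
    memLp_exp_I_mul_ofReal ((hWmem x).aestronglyMeasurable.const_mul s) 2
  have hgram : ∀ x y, ⟪(hmem x).toLp _, (hmem y).toLp _⟫ = ⟪Φγ x, Φγ y⟫ := by
    intro x y
    rw [real_inner_toLp_exp_I_mul hWlin,
      integral_exp_I_mul_whiteNoise hRsa hRR hQker hFourier hWmem hWiso hWrange, ofReal_re,
      ← hΦγ, norm_sub_rev, div_pow, Real.sq_sqrt zero_le_two]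
    ring_nf
  have hgL : ‖hg.toLp g‖ ≤ 1 := by
    rw [← sq_le_one_iff₀ (norm_nonneg _), norm_toLp_sq_eq_integral]
    exact hgnorm
  obtain ⟨fh, hfh, hfhΦ⟩ :=
    exists_norm_le_inner_eq_of_inner_eq (fun x => (hmem x).toLp _) Φγ hgram (hg.toLp g)
  have hfx : ∀ x, ⟪fh, Φγ x⟫ = f x := by
    intro x
    rw [hfhΦ, real_inner_comm, real_inner_toLp_toLp, hf]
    simp_rw [conj_exp_I_mul_ofReal, mul_comm (g _), ofReal_mul, mul_assoc]
  have hΦγnorm : ∀ x, ‖Φγ x‖ = 1 := fun x => by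
    rw [← pow_eq_one_iff_of_nonneg (norm_nonneg _) two_ne_zero, ← real_inner_self_eq_norm_sq,
      ← hΦγ]
    simp
  refine ⟨fun x => ?_, fh, hfh.trans hgL, hfx⟩
  rw [← hfx]
  calc |⟪fh, Φγ x⟫| ≤ ‖fh‖ * ‖Φγ x‖ := abs_real_inner_le_norm _ _
    _ ≤ 1 := by rw [hΦγnorm, mul_one]; exact hfh.trans hgL

/-- Let `W` be the white noise mapping of the centered Gaussian measure `N(0,Q)`
(`Q` positive self-adjoint trace-class with trivial kernel, square root `R`) on a
separable real Hilbert space `H`, let `γ > 0`, and let `g ∈ L²(H,N(0,Q);ℂ)` with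
`‖g‖ ≤ 1`. Then `f(x) = Re ∫ exp(-i√2/γ W_x(z)) g(z) dN(z|0,Q)` satisfies
`|f(x)| ≤ 1` for all `x`, and `f` lies in the RKHS `H_γ` of the Gaussian kernel
`k_γ` with `‖f‖_{H_γ} ≤ 1`. The RKHS is represented by a Hilbert space `Hγ`
together with its canonical feature map `Φγ` (so `k_γ(x,x') = ⟨Φγ x', Φγ x⟩` and
the span of the range of `Φγ` is dense), elements acting as functions via
`fh(x) = ⟨fh, Φγ x⟩`. -/
theorem stmt_19
    {H : Type*} [NormedAddCommGroup H] [InnerProductSpace ℝ H] [CompleteSpace H]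
    [TopologicalSpace.SeparableSpace H] [MeasurableSpace H] [BorelSpace H]
    {Hγ : Type*} [NormedAddCommGroup Hγ] [InnerProductSpace ℝ Hγ] [CompleteSpace Hγ]
    (Q R : H →L[ℝ] H)
    (hQsa : IsSelfAdjoint Q)
    (hQpos : ∀ x : H, 0 ≤ ⟪x, Q x⟫)
    (hQtrace : ∃ (ι : Type) (b : HilbertBasis ι ℝ H), Summable fun i => ⟪b i, Q (b i)⟫)
    (hQker : LinearMap.ker (Q : H →ₗ[ℝ] H) = ⊥)
    (hRsa : IsSelfAdjoint R)
    (hRpos : ∀ x : H, 0 ≤ ⟪x, R x⟫)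
    (hRR : ∀ x : H, R (R x) = Q x)
    (μ : Measure H) [IsProbabilityMeasure μ]
    (hFourier : ∀ u : H,
      ∫ x, Complex.exp (Complex.I * (⟪u, x⟫ : ℝ)) ∂μ
        = Complex.exp (-((⟪Q u, u⟫ : ℝ) : ℂ) / 2))
    (W : H → H → ℝ)
    (hWmem : ∀ h : H, MemLp (W h) 2 μ)
    (hWlin : ∀ (a : ℝ) (h₁ h₂ : H),
      (fun x => W (a • h₁ + h₂) x) =ᵐ[μ] fun x => a * W h₁ x + W h₂ x)
    (hWiso : ∀ h₁ h₂ : H, ∫ x, (W h₁ x - W h₂ x) ^ 2 ∂μ = ‖h₁ - h₂‖ ^ 2)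
    (hWrange : ∀ h₀ : H, (fun x => W (R h₀) x) =ᵐ[μ] fun x => ⟪h₀, x⟫)
    (γ : ℝ) (hγ : 0 < γ)
    -- the RKHS of the Gaussian kernel k_γ, via its canonical feature map:
    (Φγ : H → Hγ)
    (hΦγ : ∀ x x' : H, Real.exp (-‖x - x'‖ ^ 2 / γ ^ 2) = ⟪Φγ x', Φγ x⟫)
    (hdense : Dense ((Submodule.span ℝ (Set.range Φγ) : Submodule ℝ Hγ) : Set Hγ))
    (g : H → ℂ) (hg : MemLp g 2 μ) (hgnorm : ∫ z, ‖g z‖ ^ 2 ∂μ ≤ 1)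
    (f : H → ℝ)
    (hf : ∀ x : H, f x =
      (∫ z, Complex.exp (-(Complex.I * ((Real.sqrt 2 / γ : ℝ) : ℂ) * (W x z : ℝ)))
          * g z ∂μ).re) :
    (∀ x : H, |f x| ≤ 1) ∧
    ∃ fh : Hγ, ‖fh‖ ≤ 1 ∧ ∀ x : H, ⟪fh, Φγ x⟫ = f x :=
  stmt_19_general Q R hQker hRsa hRR μ hFourier W hWmem hWlin hWiso hWrange γ Φγ hΦγ g hg hgnorm f
    hf
end
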